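/- Let C be the 6×6 real symmetric matrix whose rows are (1,1,1,1,1,1), (1,2,1,1,2,1), (1,1,2,1,1,2), (1,1,1,1,1,1), (1,2,1,1,2,1), (1,1,2,1,1,2). Then det(y·I − C) = y³·(y − 2)·(y² − 8y + 4) for all real y. In particular, the eigenvalues of C are 0 (with multiplicity 3), 2, 4 − 2√3, and 4 + 2√3. -/
import Mathlib


open Matrix
lemma blockdet {m : Type*} [Fintype m] [DecidableEq m] {R : Type*} [CommRing R]
    (P Q : Matrix m m R) :
    (fromBlocks P Q Q P).det = (P + Q).det * (P - Q).det := by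
  have key : fromBlocks (1 : Matrix m m R) 0 (-1) 1 * fromBlocks P Q Q P *
      fromBlocks (1 : Matrix m m R) 0 1 1 = fromBlocks (P + Q) Q 0 (P - Q) := by
    rw [fromBlocks_multiply, fromBlocks_multiply]
    have e1 : (1 : Matrix m m R) * P + 0 * Q = P := by noncomm_ring
    have e2 : (1 : Matrix m m R) * Q + 0 * P = Q := by noncomm_ring
    have e3 : (-1 : Matrix m m R) * P + 1 * Q = Q - P := by noncomm_ring
    have e4 : (-1 : Matrix m m R) * Q + 1 * P = P - Q := by noncomm_ring
    rw [e1, e2, e3, e4]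
    have f1 : P * 1 + Q * 1 = P + Q := by noncomm_ring
    have f2 : P * 0 + Q * 1 = Q := by noncomm_ring
    have f3 : (Q - P) * 1 + (P - Q) * 1 = 0 := by noncomm_ring
    have f4 : (Q - P) * 0 + (P - Q) * 1 = P - Q := by noncomm_ring
    rw [f1, f2, f3, f4]
  have h1 : (fromBlocks (1 : Matrix m m R) (0 : Matrix m m R) (-1 : Matrix m m R)
      (1 : Matrix m m R)).det = 1 := by
    rw [det_fromBlocks_zero₁₂]; simp
  have h2 : (fromBlocks (1 : Matrix m m R) (0 : Matrix m m R) (1 : Matrix m m R)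
      (1 : Matrix m m R)).det = 1 := by
    rw [det_fromBlocks_zero₁₂]; simp
  have h := congrArg det key
  rw [det_mul, det_mul, h1, h2, det_fromBlocks_zero₂₁] at h
  rw [← h]; ring

/-- The matrix `C = M₂ M₂ᵀ`, where `M₂` is the `6 × 3` matrix with rows
`(1,0,0), (1,1,0), (1,0,1), (1,0,0), (1,1,0), (1,0,1)` arising from the bipartite
hub–rim decomposition of the adjacency matrix of the second generation of the
deterministic scale-free network of Barabási, Ravasz and Vicsek. -/
def C : Matrix (Fin 6) (Fin 6) ℝ :=
  !![1, 1, 1, 1, 1, 1;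
     1, 2, 1, 1, 2, 1;
     1, 1, 2, 1, 1, 2;
     1, 1, 1, 1, 1, 1;
     1, 2, 1, 1, 2, 1;
     1, 1, 2, 1, 1, 2]

def AA : Matrix (Fin 3) (Fin 3) ℝ := !![1,1,1;1,2,1;1,1,2]

set_option maxHeartbeats 1000000 in
lemma hdet (y : ℝ) : (y • (1 : Matrix (Fin 6) (Fin 6) ℝ) - C).det
    = y ^ 3 * (y - 2) * (y ^ 2 - 8 * y + 4) := by
  have hC : (y • (1 : Matrix (Fin 6) (Fin 6) ℝ) - C)
      = reindex finSumFinEquiv finSumFinEquiv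
        (fromBlocks (y • 1 - AA) (-AA) (-AA) (y • 1 - AA)) := by
    ext i j
    fin_cases i <;> fin_cases j <;>
      norm_num [C, AA, Matrix.one_apply, Matrix.reindex_apply, Matrix.submatrix_apply,
        Matrix.fromBlocks, finSumFinEquiv, Fin.addCases, Fin.castLT, Fin.subNat,
        Matrix.vecHead, Matrix.vecTail, Fin.ext_iff]
  rw [hC, det_reindex_self, blockdet]
  have e1 : (y • 1 - AA) + (-AA) = y • (1 : Matrix (Fin 3) (Fin 3) ℝ) - (2:ℝ) • AA := by
    ext i j; simp [two_smul]; ring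
  have e2 : (y • 1 - AA) - (-AA) = y • (1 : Matrix (Fin 3) (Fin 3) ℝ) := by
    ext i j; simp
  rw [e1, e2]
  have h3 : ((y • 1 - (2:ℝ) • AA : Matrix (Fin 3) (Fin 3) ℝ)).det
      = (y - 2) * (y ^ 2 - 8 * y + 4) := by
    simp [Matrix.det_fin_three, AA, Matrix.one_apply, Matrix.vecHead, Matrix.vecTail,
      Fin.ext_iff]
    ring
  have h4 : (y • (1 : Matrix (Fin 3) (Fin 3) ℝ)).det = y ^ 3 := by simp [det_smul]
  rw [h3, h4]; ring

open Polynomial in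
lemma heval (y : ℝ) : C.charpoly.eval y
    = (y • (1 : Matrix (Fin 6) (Fin 6) ℝ) - C).det := by
  rw [Matrix.charpoly]
  have := (RingHom.map_det (evalRingHom y) (charmatrix C)).symm
  rw [show Polynomial.eval y (charmatrix C).det = (evalRingHom y) (charmatrix C).det from rfl,
    RingHom.map_det]
  congr 1
  ext i j
  by_cases h : i = j <;>
    simp [Matrix.charmatrix_apply, h, Matrix.one_apply, Matrix.diagonal_apply]

open Polynomial in
lemma hq (y : ℝ) : y ^ 2 - 8 * y + 4
    = (y - (4 - 2 * Real.sqrt 3)) * (y - (4 + 2 * Real.sqrt 3)) := by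
  have h3 := Real.sq_sqrt (show (0:ℝ) ≤ 3 by norm_num)
  linear_combination 4 * h3

open Polynomial in
lemma hfact : C.charpoly
    = ((X : ℝ[X]) - Polynomial.C 0) ^ 3 * (X - Polynomial.C 2)
      * ((X - Polynomial.C (4 - 2 * Real.sqrt 3)) * (X - Polynomial.C (4 + 2 * Real.sqrt 3))) := by
  apply Polynomial.funext
  intro r
  rw [heval, hdet]
  simp only [eval_mul, eval_pow, eval_sub, eval_X, eval_C, sub_zero]
  rw [hq r]

open Polynomial in
lemma rm_cube (x : ℝ) :
    (((X : ℝ[X]) - Polynomial.C 0) ^ 3).rootMultiplicity x = if x = 0 then 3 else 0 := by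
  rcases eq_or_ne x 0 with h | h
  · subst h; simpa using rootMultiplicity_X_sub_C_pow (0:ℝ) 3
  · rw [if_neg h]
    apply rootMultiplicity_eq_zero
    simp [IsRoot, sub_eq_zero, h]

open Polynomial in
lemma hrm (x : ℝ) : C.charpoly.rootMultiplicity x
    = (if x = 0 then 3 else 0) + (if x = 2 then 1 else 0)
      + ((if x = 4 - 2 * Real.sqrt 3 then 1 else 0)
        + (if x = 4 + 2 * Real.sqrt 3 then 1 else 0)) := by
  have n1 : ((X : ℝ[X]) - Polynomial.C 0) ^ 3 ≠ 0 := pow_ne_zero _ (X_sub_C_ne_zero 0)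
  have n2 : ((X : ℝ[X]) - Polynomial.C 2) ≠ 0 := X_sub_C_ne_zero 2
  have n3 : ((X : ℝ[X]) - Polynomial.C (4 - 2 * Real.sqrt 3)) ≠ 0 := X_sub_C_ne_zero _
  have n4 : ((X : ℝ[X]) - Polynomial.C (4 + 2 * Real.sqrt 3)) ≠ 0 := X_sub_C_ne_zero _
  rw [hfact, rootMultiplicity_mul (mul_ne_zero (mul_ne_zero n1 n2) (mul_ne_zero n3 n4)),
    rootMultiplicity_mul (mul_ne_zero n1 n2), rootMultiplicity_mul (mul_ne_zero n3 n4),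
    rm_cube, rootMultiplicity_X_sub_C, rootMultiplicity_X_sub_C, rootMultiplicity_X_sub_C]

/-- `det (y·I − C) = y³·(y − 2)·(y² − 8y + 4)` for all real `y`.
In particular, the eigenvalues of `C` are `0` (with multiplicity `3`), `2`,
`4 − 2√3`, and `4 + 2√3`. -/
theorem dsfn_charpoly_MMT :
    (∀ y : ℝ, (y • (1 : Matrix (Fin 6) (Fin 6) ℝ) - C).det
        = y ^ 3 * (y - 2) * (y ^ 2 - 8 * y + 4)) ∧
    spectrum ℝ C = {0, 2, 4 - 2 * Real.sqrt 3, 4 + 2 * Real.sqrt 3} ∧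
    C.charpoly.rootMultiplicity 0 = 3 ∧
    C.charpoly.rootMultiplicity 2 = 1 ∧
    C.charpoly.rootMultiplicity (4 - 2 * Real.sqrt 3) = 1 ∧
    C.charpoly.rootMultiplicity (4 + 2 * Real.sqrt 3) = 1 := by
  have h1 : 1 < Real.sqrt 3 := by
    nlinarith [Real.sq_sqrt (show (0:ℝ) ≤ 3 by norm_num), Real.sqrt_nonneg 3]
  have h2 : Real.sqrt 3 < 2 := by
    nlinarith [Real.sq_sqrt (show (0:ℝ) ≤ 3 by norm_num), Real.sqrt_nonneg 3]
  refine ⟨hdet, ?_, ?_, ?_, ?_, ?_⟩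
  · ext μ
    have halg : (algebraMap ℝ (Matrix (Fin 6) (Fin 6) ℝ)) μ - C
        = μ • (1 : Matrix (Fin 6) (Fin 6) ℝ) - C := by
      rw [Algebra.algebraMap_eq_smul_one]
    rw [spectrum.mem_iff, halg, Matrix.isUnit_iff_isUnit_det, isUnit_iff_ne_zero, not_ne_iff,
      hdet, hq μ]
    simp only [mul_eq_zero, pow_eq_zero_iff (n := 3) (by norm_num), sub_eq_zero,
      Set.mem_insert_iff, Set.mem_singleton_iff]
    tauto
  · rw [hrm, if_pos rfl, if_neg (by norm_num : (0:ℝ) ≠ 2),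
      if_neg (by intro h; linarith : ¬(0:ℝ) = 4 - 2 * Real.sqrt 3),
      if_neg (by intro h; linarith : ¬(0:ℝ) = 4 + 2 * Real.sqrt 3)]
  · rw [hrm, if_neg (by norm_num : (2:ℝ) ≠ 0), if_pos rfl,
      if_neg (by intro h; linarith : ¬(2:ℝ) = 4 - 2 * Real.sqrt 3),
      if_neg (by intro h; linarith : ¬(2:ℝ) = 4 + 2 * Real.sqrt 3)]
  · rw [hrm, if_neg (by intro h; linarith : ¬(4 - 2 * Real.sqrt 3 : ℝ) = 0),
      if_neg (by intro h; linarith : ¬(4 - 2 * Real.sqrt 3 : ℝ) = 2), if_pos rfl,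
      if_neg (by intro h; linarith : ¬(4 - 2 * Real.sqrt 3 : ℝ) = 4 + 2 * Real.sqrt 3)]
  · rw [hrm, if_neg (by intro h; linarith : ¬(4 + 2 * Real.sqrt 3 : ℝ) = 0),
      if_neg (by intro h; linarith : ¬(4 + 2 * Real.sqrt 3 : ℝ) = 2),
      if_neg (by intro h; linarith : ¬(4 + 2 * Real.sqrt 3 : ℝ) = 4 - 2 * Real.sqrt 3),
      if_pos rfl]
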